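/- A graph G whose vertex set can be partitioned into sets A, B, C such that A is independent, B is a clique, C is either empty or induces a 5-cycle, and every vertex of C is adjacent to all of B and none of A, contains no induced subgraph isomorphic to 2K_2 or C_4. -/

import Mathlib

open SimpleGraph Finset

/-- `s` is an independent set in `G`. -/
def IsIndepSet {α : Type*} (G : SimpleGraph α) (s : Set α) : Prop :=
  s.Pairwise fun a b => ¬ G.Adj a b

/-- `(G, A, B)` is a splitted graph: `A` an independent set and `B` a clique
partitioning the vertex set of `G`. -/
def IsSplitted {α : Type*} (G : SimpleGraph α) (A B : Set α) : Prop :=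
  _root_.IsIndepSet G A ∧ G.IsClique B ∧ A ∪ B = Set.univ ∧ Disjoint A B

/-- `G` is a split graph. -/
def IsSplitGraph {α : Type*} (G : SimpleGraph α) : Prop :=
  ∃ A B : Set α, IsSplitted G A B

/-- Tyshkevich composition `(G, A, B) ∘ H`: the disjoint union of `G` and `H`
together with all edges between the clique `B` and the vertices of `H`. -/
def comp {α β : Type*} (G : SimpleGraph α) (B : Set α) (H : SimpleGraph β) :
    SimpleGraph (α ⊕ β) where
  Adj x y :=
    match x, y with
    | Sum.inl a, Sum.inl a' => G.Adj a a'
    | Sum.inr b, Sum.inr b' => H.Adj b b'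
    | Sum.inl a, Sum.inr _ => a ∈ B
    | Sum.inr _, Sum.inl a => a ∈ B
  symm := ⟨by
    rintro (a | b) (a' | b') h
    · exact G.adj_symm h
    · exact h
    · exact h
    · exact H.adj_symm h⟩
  loopless := ⟨by
    rintro (a | b) h
    · exact G.irrefl h
    · exact H.irrefl h⟩

/-- The degree of a vertex, as the cardinality of its neighborhood. -/
noncomputable def deg {α : Type*} (G : SimpleGraph α) (v : α) : ℕ :=
  (G.neighborSet v).ncard

/-- The disjoint union of two edges. -/
def twoK2 : SimpleGraph (Fin 4) :=
  SimpleGraph.fromRel fun a b => (a.val = 0 ∧ b.val = 1) ∨ (a.val = 2 ∧ b.val = 3)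

/-- The 4-cycle. -/
def cycle4 : SimpleGraph (Fin 4) :=
  SimpleGraph.fromRel fun a b =>
    (a.val = 0 ∧ b.val = 1) ∨ (a.val = 1 ∧ b.val = 2) ∨
    (a.val = 2 ∧ b.val = 3) ∨ (a.val = 3 ∧ b.val = 0)

/-- The path on four vertices. -/
def path4 : SimpleGraph (Fin 4) :=
  SimpleGraph.fromRel fun a b =>
    (a.val = 0 ∧ b.val = 1) ∨ (a.val = 1 ∧ b.val = 2) ∨ (a.val = 2 ∧ b.val = 3)

/-- The 5-cycle. -/
def cycle5 : SimpleGraph (Fin 5) :=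
  SimpleGraph.fromRel fun a b =>
    (a.val = 0 ∧ b.val = 1) ∨ (a.val = 1 ∧ b.val = 2) ∨
    (a.val = 2 ∧ b.val = 3) ∨ (a.val = 3 ∧ b.val = 4) ∨ (a.val = 4 ∧ b.val = 0)


instance : DecidableRel cycle5.Adj := fun a b =>
  decidable_of_iff _ (SimpleGraph.fromRel_adj _ a b).symm

instance : DecidableRel twoK2.Adj := fun a b =>
  decidable_of_iff _ (SimpleGraph.fromRel_adj _ a b).symm

instance : DecidableRel cycle4.Adj := fun a b =>
  decidable_of_iff _ (SimpleGraph.fromRel_adj _ a b).symm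

set_option maxRecDepth 100000 in
lemma noC5_twoK2 : ∀ g : Fin 4 → Fin 5, Function.Injective g →
    ¬ (∀ i j, cycle5.Adj (g i) (g j) ↔ twoK2.Adj i j) := by decide

set_option maxRecDepth 100000 in
lemma noC5_cycle4 : ∀ g : Fin 4 → Fin 5, Function.Injective g →
    ¬ (∀ i j, cycle5.Adj (g i) (g j) ↔ cycle4.Adj i j) := by decide

/-- the 'if' direction of Blázsik et al.: a graph whose vertex
set partitions into an independent set `A`, a clique `B`, and a set `C` that is
empty or induces `C₅`, with every vertex of `C` adjacent to all of `B` and to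
none of `A`, contains no induced `2K₂` or `C₄`. -/
theorem stmt16 {V : Type*} [Fintype V] (G : SimpleGraph V) (A B C : Set V)
    (hcover : A ∪ B ∪ C = Set.univ)
    (hAB : Disjoint A B) (hAC : Disjoint A C) (hBC : Disjoint B C)
    (hA : _root_.IsIndepSet G A) (hB : G.IsClique B)
    (hC : C = ∅ ∨ Nonempty (G.induce C ≃g cycle5))
    (hCadj : ∀ c ∈ C, (∀ b ∈ B, G.Adj c b) ∧ ∀ a ∈ A, ¬ G.Adj c a) :
    ∀ s : Set V, ¬ Nonempty (G.induce s ≃g twoK2) ∧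
      ¬ Nonempty (G.induce s ≃g cycle4) := by
  have memU : ∀ v : V, v ∈ A ∨ v ∈ B ∨ v ∈ C := by
    intro v
    have hv : v ∈ A ∪ B ∪ C := hcover ▸ Set.mem_univ v
    rcases hv with (h | h) | h
    · exact Or.inl h
    · exact Or.inr (Or.inl h)
    · exact Or.inr (Or.inr h)
  have adjCB : ∀ {c b : V}, c ∈ C → b ∈ B → G.Adj c b := fun hc hb =>
    (hCadj _ hc).1 _ hb
  have nadjCA : ∀ {c a : V}, c ∈ C → a ∈ A → ¬ G.Adj c a := fun hc ha =>
    (hCadj _ hc).2 _ ha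
  have nbrA : ∀ {x y : V}, G.Adj x y → x ∈ A → y ∈ B := by
    intro x y h hxA
    rcases memU y with hy | hy | hy
    · exact absurd h (hA hxA hy h.ne)
    · exact hy
    · exact absurd h.symm (nadjCA hy hxA)
  have nnbrB : ∀ {x y : V}, x ≠ y → ¬ G.Adj x y → x ∈ B → y ∈ A := by
    intro x y hne h hxB
    rcases memU y with hy | hy | hy
    · exact hy
    · exact absurd (hB hxB hy hne) h
    · exact absurd (adjCB hy hxB).symm h
  intro s
  constructor
  · rintro ⟨e⟩
    set x : Fin 4 → V := fun i => (e.symm i).1 with hxdef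
    have hx : ∀ i j, G.Adj (x i) (x j) ↔ twoK2.Adj i j := by
      intro i j
      simpa using e.symm.map_adj_iff (v := i) (w := j)
    have hne : ∀ i j : Fin 4, i ≠ j → x i ≠ x j := fun i j hij h =>
      hij (e.symm.injective (Subtype.ext h))
    have a01 : G.Adj (x 0) (x 1) := (hx 0 1).2 (by decide)
    have a23 : G.Adj (x 2) (x 3) := (hx 2 3).2 (by decide)
    have n02 : ¬ G.Adj (x 0) (x 2) := fun h => by
      exact absurd ((hx 0 2).1 h) (by decide)
    have n03 : ¬ G.Adj (x 0) (x 3) := fun h => by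
      exact absurd ((hx 0 3).1 h) (by decide)
    have n12 : ¬ G.Adj (x 1) (x 2) := fun h => by
      exact absurd ((hx 1 2).1 h) (by decide)
    have n13 : ¬ G.Adj (x 1) (x 3) := fun h => by
      exact absurd ((hx 1 3).1 h) (by decide)
    have h0C : x 0 ∈ C := by
      rcases memU (x 0) with h0 | h0 | h0
      · have h1B : x 1 ∈ B := nbrA a01 h0
        have h2A : x 2 ∈ A := nnbrB (hne 1 2 (by decide)) n12 h1B
        have h3A : x 3 ∈ A := nnbrB (hne 1 3 (by decide)) n13 h1B
        exact absurd a23 (hA h2A h3A a23.ne)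
      · have h2A : x 2 ∈ A := nnbrB (hne 0 2 (by decide)) n02 h0
        have h3A : x 3 ∈ A := nnbrB (hne 0 3 (by decide)) n03 h0
        exact absurd a23 (hA h2A h3A a23.ne)
      · exact h0
    have h2C : x 2 ∈ C := by
      rcases memU (x 2) with h2 | h2 | h2
      · have h3B : x 3 ∈ B := nbrA a23 h2
        have h0A : x 0 ∈ A := nnbrB (hne 3 0 (by decide)) (fun h => n03 h.symm) h3B
        have h1A : x 1 ∈ A := nnbrB (hne 3 1 (by decide)) (fun h => n13 h.symm) h3B
        exact absurd a01 (hA h0A h1A a01.ne)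
      · have h0A : x 0 ∈ A := nnbrB (hne 2 0 (by decide)) (fun h => n02 h.symm) h2
        have h1A : x 1 ∈ A := nnbrB (hne 2 1 (by decide)) (fun h => n12 h.symm) h2
        exact absurd a01 (hA h0A h1A a01.ne)
      · exact h2
    have h1C : x 1 ∈ C := by
      rcases memU (x 1) with h1 | h1 | h1
      · exact absurd a01 (nadjCA h0C h1)
      · exact absurd (adjCB h2C h1).symm n12
      · exact h1
    have h3C : x 3 ∈ C := by
      rcases memU (x 3) with h3 | h3 | h3
      · exact absurd a23 (nadjCA h2C h3)
      · exact absurd (adjCB h0C h3) n03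
      · exact h3
    have hC' : ∀ i, x i ∈ C := by
      intro i
      fin_cases i <;> assumption
    rcases hC with hCe | hCf
    · exact absurd (hC' 0) (by rw [hCe]; exact Set.notMem_empty _)
    · obtain ⟨f⟩ := hCf
      set g : Fin 4 → Fin 5 := fun i => f ⟨x i, hC' i⟩ with hgdef
      have hginj : Function.Injective g := by
        intro i j hij
        have hval : x i = x j := Subtype.mk_eq_mk.mp (f.injective hij)
        by_contra hne'
        exact hne i j hne' hval
      refine noC5_twoK2 g hginj ?_
      intro i j
      have h2 : (G.induce C).Adj ⟨x i, hC' i⟩ ⟨x j, hC' j⟩ ↔ G.Adj (x i) (x j) := by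
        simp
      exact f.map_adj_iff.trans (h2.trans (hx i j))
  · rintro ⟨e⟩
    set x : Fin 4 → V := fun i => (e.symm i).1 with hxdef
    have hx : ∀ i j, G.Adj (x i) (x j) ↔ cycle4.Adj i j := by
      intro i j
      simpa using e.symm.map_adj_iff (v := i) (w := j)
    have hne : ∀ i j : Fin 4, i ≠ j → x i ≠ x j := fun i j hij h =>
      hij (e.symm.injective (Subtype.ext h))
    have a01 : G.Adj (x 0) (x 1) := (hx 0 1).2 (by decide)
    have a12 : G.Adj (x 1) (x 2) := (hx 1 2).2 (by decide)
    have a23 : G.Adj (x 2) (x 3) := (hx 2 3).2 (by decide)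
    have a30 : G.Adj (x 3) (x 0) := (hx 3 0).2 (by decide)
    have n02 : ¬ G.Adj (x 0) (x 2) := fun h => by
      exact absurd ((hx 0 2).1 h) (by decide)
    have n13 : ¬ G.Adj (x 1) (x 3) := fun h => by
      exact absurd ((hx 1 3).1 h) (by decide)
    have h0C : x 0 ∈ C := by
      rcases memU (x 0) with h0 | h0 | h0
      · have h1B : x 1 ∈ B := nbrA a01 h0
        have h3B : x 3 ∈ B := nbrA a30.symm h0
        exact absurd (hB h1B h3B (hne 1 3 (by decide))) n13
      · have h2A : x 2 ∈ A := nnbrB (hne 0 2 (by decide)) n02 h0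
        have h1B : x 1 ∈ B := nbrA a12.symm h2A
        have h3B : x 3 ∈ B := nbrA a23 h2A
        exact absurd (hB h1B h3B (hne 1 3 (by decide))) n13
      · exact h0
    have h2C : x 2 ∈ C := by
      rcases memU (x 2) with h2 | h2 | h2
      · have h1B : x 1 ∈ B := nbrA a12.symm h2
        have h3B : x 3 ∈ B := nbrA a23 h2
        exact absurd (hB h1B h3B (hne 1 3 (by decide))) n13
      · exact absurd (adjCB h0C h2) n02
      · exact h2
    have h1C : x 1 ∈ C := by
      rcases memU (x 1) with h1 | h1 | h1
      · exact absurd a01 (nadjCA h0C h1)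
      · have h3A : x 3 ∈ A := nnbrB (hne 1 3 (by decide)) n13 h1
        exact absurd a30.symm (nadjCA h0C h3A)
      · exact h1
    have h3C : x 3 ∈ C := by
      rcases memU (x 3) with h3 | h3 | h3
      · exact absurd a30.symm (nadjCA h0C h3)
      · exact absurd (adjCB h1C h3) n13
      · exact h3
    have hC' : ∀ i, x i ∈ C := by
      intro i
      fin_cases i <;> assumption
    rcases hC with hCe | hCf
    · exact absurd (hC' 0) (by rw [hCe]; exact Set.notMem_empty _)
    · obtain ⟨f⟩ := hCf
      set g : Fin 4 → Fin 5 := fun i => f ⟨x i, hC' i⟩ with hgdef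
      have hginj : Function.Injective g := by
        intro i j hij
        have hval : x i = x j := Subtype.mk_eq_mk.mp (f.injective hij)
        by_contra hne'
        exact hne i j hne' hval
      refine noC5_cycle4 g hginj ?_
      intro i j
      have h2 : (G.induce C).Adj ⟨x i, hC' i⟩ ⟨x j, hC' j⟩ ↔ G.Adj (x i) (x j) := by
        simp
      exact f.map_adj_iff.trans (h2.trans (hx i j))
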